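/- arXiv:1709.02069 — 2 statements merged into one kernel-verified Lean document; each statement's English description precedes it below -/
import Mathlib

section
/- For every τ ∈ (0,1), ν > 0 and u ∈ ℝ, one has 0 ≤ ρ_τ(u) − H_{ν,τ}(u) ≤ (ν/2)·max(τ, 1−τ)². Consequently H_{ν,τ} converges to ρ_τ uniformly on ℝ as ν → 0⁺. -/
open Filter

/-- The quantile loss function `ρ_τ(u) = u (τ - 1{u<0})`. -/
noncomputable def quantileLoss (τ : ℝ) (u : ℝ) : ℝ :=
  u * (τ - if u < 0 then 1 else 0)

/-- The generalized Huber function `H_{ν,τ}`. -/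
noncomputable def genHuber (ν τ : ℝ) (u : ℝ) : ℝ :=
  if u ≤ (τ - 1) * ν then u * (τ - 1) - (1 / 2) * (τ - 1) ^ 2 * ν
  else if u ≤ τ * ν then u ^ 2 / (2 * ν)
  else u * τ - (1 / 2) * τ ^ 2 * ν

lemma key (τ ν u : ℝ) (hτ : τ ∈ Set.Ioo (0 : ℝ) 1) (hν : 0 < ν) :
    0 ≤ quantileLoss τ u - genHuber ν τ u ∧
      quantileLoss τ u - genHuber ν τ u ≤ ν / 2 * (max τ (1 - τ)) ^ 2 := by
  obtain ⟨h0, h1⟩ := hτ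
  have hm1 : τ ≤ max τ (1 - τ) := le_max_left _ _
  have hm2 : 1 - τ ≤ max τ (1 - τ) := le_max_right _ _
  have hm0 : 0 ≤ max τ (1 - τ) := le_trans h0.le hm1
  have hmsq1 : τ ^ 2 ≤ (max τ (1 - τ)) ^ 2 := by nlinarith
  have hmsq2 : (1 - τ) ^ 2 ≤ (max τ (1 - τ)) ^ 2 := by nlinarith
  have hq : u ^ 2 / (2 * ν) * (2 * ν) = u ^ 2 :=
    div_mul_cancel₀ _ (by positivity)
  unfold quantileLoss genHuber
  split_ifs with h2 h3 h4 h5 h6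
  · constructor <;> nlinarith
  · constructor
    · nlinarith [hq, mul_nonpos_of_nonpos_of_nonneg (le_of_lt h2) (by nlinarith : (0:ℝ) ≤ u - 2 * ν * (τ - 1))]
    · rw [sub_le_iff_le_add, ← sub_le_iff_le_add', le_div_iff₀ (by positivity : (0:ℝ) < 2 * ν)]
      nlinarith [sq_nonneg (u - ν * (τ - 1)), mul_pos hν hν]
  · nlinarith
  · nlinarith
  · constructor
    · nlinarith [hq, mul_nonneg (not_lt.mp h2) (by nlinarith : (0:ℝ) ≤ 2 * ν * τ - u)]
    · rw [sub_le_iff_le_add, ← sub_le_iff_le_add', le_div_iff₀ (by positivity : (0:ℝ) < 2 * ν)]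
      nlinarith [sq_nonneg (u - ν * τ), mul_pos hν hν]
  · constructor <;> nlinarith

/-- For every `τ ∈ (0,1)`, `ν > 0` and `u ∈ ℝ`, one has
`0 ≤ ρ_τ(u) - H_{ν,τ}(u) ≤ (ν/2) max(τ, 1-τ)²`.  Consequently `H_{ν,τ}`
converges to `ρ_τ` uniformly on `ℝ` as `ν → 0⁺`. -/
theorem genHuber_approx_quantileLoss (τ : ℝ) (hτ : τ ∈ Set.Ioo (0 : ℝ) 1) :
    (∀ ν : ℝ, 0 < ν → ∀ u : ℝ,
        0 ≤ quantileLoss τ u - genHuber ν τ u ∧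
          quantileLoss τ u - genHuber ν τ u ≤ ν / 2 * (max τ (1 - τ)) ^ 2) ∧
      TendstoUniformly (fun ν u => genHuber ν τ u) (quantileLoss τ)
        (nhdsWithin (0 : ℝ) (Set.Ioi 0)) := by
  obtain ⟨h0, h1⟩ := hτ
  refine ⟨fun ν hν u => key τ ν u ⟨h0, h1⟩ hν, ?_⟩
  rw [Metric.tendstoUniformly_iff]
  intro ε hε
  filter_upwards [Ioo_mem_nhdsGT_of_mem (Set.left_mem_Ico.mpr hε)] with ν hν u
  obtain ⟨hl, hr⟩ := key τ ν u ⟨h0, h1⟩ hν.1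
  rw [Real.dist_eq, abs_of_nonneg hl]
  have hM : max τ (1 - τ) ≤ 1 := max_le h1.le (by linarith)
  have hm0 : 0 ≤ max τ (1 - τ) := le_trans h0.le (le_max_left _ _)
  have hsq : (max τ (1 - τ)) ^ 2 ≤ 1 := by nlinarith
  have : ν / 2 * (max τ (1 - τ)) ^ 2 ≤ ν / 2 := by nlinarith [hν.1]
  linarith [hν.2]
end

section
/- (Stationarity of limit points of block relaxation, part of Proposition 1 global convergence.) Let f : ℝ^m × ℝ^n → ℝ be continuously differentiable, and suppose for some initial point (a₀, b₀) the superlevel set {(a,b) : f(a,b) ≥ f(a₀,b₀)} is compact. Suppose sequences (a_p), (b_p) start from (a₀, b₀) and satisfy, for every p: f(a_{p+1}, b_p) = sup_a f(a, b_p) and f(a_{p+1}, b_{p+1}) = sup_b f(a_{p+1}, b), and that for each fixed b the function a ↦ f(a,b) is strictly concave and for each fixed a the function b ↦ f(a,b) is strictly concave. Then every limit point (a*, b*) of the sequence ((a_p, b_p)) is a stationary point of f, i.e. the total derivative of f at (a*, b*) is zero. -/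
open Filter

set_option maxHeartbeats 1000000 in
/-- (Stationarity of limit points of block relaxation.)  Let
`f : ℝ^m × ℝ^n → ℝ` be continuously differentiable with compact superlevel set
`{(a,b) : f(a,b) ≥ f(a₀,b₀)}`.  Suppose the sequences `(a_p), (b_p)` start from
`(a₀, b₀)` and perform exact alternating maximization, and that `f` is strictly
concave in each block.  Then every limit point `(a*, b*)` of `((a_p, b_p))` is a
stationary point of `f`, i.e. the total derivative of `f` there is zero. -/
theorem blockRelaxation_clusterPt_stationary {m n : ℕ}
    (f : ((Fin m → ℝ) × (Fin n → ℝ)) → ℝ) (hf : ContDiff ℝ 1 f)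
    (a : ℕ → Fin m → ℝ) (b : ℕ → Fin n → ℝ)
    (hcompact : IsCompact {x : (Fin m → ℝ) × (Fin n → ℝ) | f (a 0, b 0) ≤ f x})
    (ha : ∀ p : ℕ, ∀ a' : Fin m → ℝ, f (a', b p) ≤ f (a (p + 1), b p))
    (hb : ∀ p : ℕ, ∀ b' : Fin n → ℝ, f (a (p + 1), b') ≤ f (a (p + 1), b (p + 1)))
    (hconca : ∀ b' : Fin n → ℝ, StrictConcaveOn ℝ Set.univ (fun a' => f (a', b')))
    (hconcb : ∀ a' : Fin m → ℝ, StrictConcaveOn ℝ Set.univ (fun b' => f (a', b'))) :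
    ∀ x : (Fin m → ℝ) × (Fin n → ℝ),
      MapClusterPt x atTop (fun p => (a p, b p)) → fderiv ℝ f x = 0 := by
  intro x hx
  set S : Set ((Fin m → ℝ) × (Fin n → ℝ)) := {x | f (a 0, b 0) ≤ f x} with hS
  set seq : ℕ → (Fin m → ℝ) × (Fin n → ℝ) := fun p => (a p, b p) with hseq
  set mid : ℕ → (Fin m → ℝ) × (Fin n → ℝ) := fun p => (a (p + 1), b p) with hmid
  set v : ℕ → ℝ := fun p => f (seq p) with hv
  have hcont : Continuous f := hf.continuous
  -- monotonicity of values
  have hstep : ∀ p, v p ≤ f (mid p) ∧ f (mid p) ≤ v (p + 1) :=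
    fun p => ⟨ha p (a p), hb p (b p)⟩
  have hmono : Monotone v :=
    monotone_nat_of_le_succ fun p => (hstep p).1.trans (hstep p).2
  -- the sequences stay in the compact superlevel set
  have hseqS : ∀ p, seq p ∈ S := fun p => hmono (Nat.zero_le p)
  have hmidS : ∀ p, mid p ∈ S := fun p => le_trans (hseqS p) (hstep p).1
  -- values are bounded above
  obtain ⟨z, hzS, hzmax⟩ :=
    hcompact.exists_isMaxOn ⟨seq 0, le_refl (f (seq 0))⟩ hcont.continuousOn
  have hbdd : BddAbove (Set.range v) := by
    refine ⟨f z, ?_⟩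
    rintro _ ⟨p, rfl⟩
    exact hzmax (hseqS p)
  -- the values converge
  set L : ℝ := ⨆ p, v p with hL
  have hvL : Tendsto v atTop (nhds L) := tendsto_atTop_ciSup hmono hbdd
  -- subsequence converging to x
  obtain ⟨φ, hφ, hφx⟩ := TopologicalSpace.FirstCountableTopology.tendsto_subseq hx
  have hfx : f x = L := by
    have h1 : Tendsto (v ∘ φ) atTop (nhds (f x)) :=
      (hcont.tendsto x).comp hφx
    have h2 : Tendsto (v ∘ φ) atTop (nhds L) := hvL.comp hφ.tendsto_atTop
    exact tendsto_nhds_unique h1 h2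
  -- extract a further subsequence along which `mid` converges
  obtain ⟨c, hcS, ψ, hψ, hc⟩ := hcompact.tendsto_subseq (fun k => hmidS (φ k))
  set σ : ℕ → ℕ := φ ∘ ψ with hσ
  have hσm : StrictMono σ := hφ.comp hψ
  have hσx : Tendsto (seq ∘ σ) atTop (nhds x) := hφx.comp hψ.tendsto_atTop
  -- the second component of c is x.2
  have hc2 : c.2 = x.2 := by
    have h1 : Tendsto (fun k => b (σ k)) atTop (nhds c.2) :=
      (continuous_snd.tendsto c).comp hc
    have h2 : Tendsto (fun k => b (σ k)) atTop (nhds x.2) :=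
      (continuous_snd.tendsto x).comp hσx
    exact tendsto_nhds_unique h1 h2
  have hmidlim : Tendsto (mid ∘ σ) atTop (nhds (c.1, x.2)) := by
    have : (c.1, x.2) = c := by rw [← hc2]
    rw [this]; exact hc
  -- limits of a (σ k + 1)
  have halim : Tendsto (fun k => a (σ k + 1)) atTop (nhds c.1) :=
    (continuous_fst.tendsto _).comp hmidlim
  have hblim : Tendsto (fun k => b (σ k)) atTop (nhds x.2) :=
    (continuous_snd.tendsto x).comp hσx
  -- f(mid (σ k)) tends to L by squeezing
  have hvσ : Tendsto (fun k => v (σ k)) atTop (nhds L) :=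
    hvL.comp hσm.tendsto_atTop
  have hvσ1 : Tendsto (fun k => v (σ k + 1)) atTop (nhds L) :=
    hvL.comp (tendsto_atTop_mono (fun k => Nat.le_succ (σ k)) hσm.tendsto_atTop)
  have hmidL : Tendsto (fun k => f (mid (σ k))) atTop (nhds L) :=
    tendsto_of_tendsto_of_tendsto_of_le_of_le hvσ hvσ1
      (fun k => (hstep (σ k)).1) (fun k => (hstep (σ k)).2)
  have hfc : f (c.1, x.2) = L := by
    have h1 : Tendsto (fun k => f (mid (σ k))) atTop (nhds (f (c.1, x.2))) :=
      (hcont.tendsto _).comp hmidlim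
    exact tendsto_nhds_unique h1 hmidL
  -- c.1 maximizes f(·, x.2)
  have hmaxc : ∀ a0, f (a0, x.2) ≤ L := by
    intro a0
    have h1 : Tendsto (fun k => f (a0, b (σ k))) atTop (nhds (f (a0, x.2))) :=
      (hcont.tendsto _).comp (Tendsto.prodMk_nhds tendsto_const_nhds hblim)
    exact le_of_tendsto_of_tendsto' h1 hmidL fun k => ha (σ k) a0
  -- x.1 also maximizes f(·, x.2), hence c.1 = x.1 by strict concavity
  have hxeq : c.1 = x.1 := by
    refine (hconca x.2).eq_of_isMaxOn ?_ ?_ (Set.mem_univ _) (Set.mem_univ _)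
    · intro a0 _
      simpa [hfc] using hmaxc a0
    · intro a0 _
      have : f (x.1, x.2) = L := by simpa using hfx
      simpa [this] using hmaxc a0
  -- x.2 maximizes f(x.1, ·)
  have hmaxb : ∀ b0, f (x.1, b0) ≤ L := by
    intro b0
    have halim' : Tendsto (fun k => a (σ k + 1)) atTop (nhds x.1) := by
      rwa [hxeq] at halim
    have h1 : Tendsto (fun k => f (a (σ k + 1), b0)) atTop (nhds (f (x.1, b0))) :=
      (hcont.tendsto _).comp (Tendsto.prodMk_nhds halim' tendsto_const_nhds)
    exact le_of_tendsto_of_tendsto' h1 hvσ1 fun k => hb (σ k) b0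
  -- stationarity
  have hdf : HasFDerivAt f (fderiv ℝ f x) x :=
    ((hf.differentiable one_ne_zero) x).hasFDerivAt
  have hga : HasFDerivAt (fun a0 => f (a0, x.2))
      ((fderiv ℝ f x).comp (ContinuousLinearMap.inl ℝ _ _)) x.1 := by
    have := (show HasFDerivAt f (fderiv ℝ f x) (x.1, x.2) from hdf).comp x.1 (hasFDerivAt_prodMk_left (𝕜 := ℝ) x.1 x.2)
    exact this
  have hgb : HasFDerivAt (fun b0 => f (x.1, b0))
      ((fderiv ℝ f x).comp (ContinuousLinearMap.inr ℝ _ _)) x.2 := by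
    have := (show HasFDerivAt f (fderiv ℝ f x) (x.1, x.2) from hdf).comp x.2 (hasFDerivAt_prodMk_right x.1 x.2)
    exact this
  have hLa : IsLocalMax (fun a0 => f (a0, x.2)) x.1 := by
    refine Filter.Eventually.of_forall fun a0 => ?_
    have : f (x.1, x.2) = L := by simpa using hfx
    simpa [this] using hmaxc a0
  have hLb : IsLocalMax (fun b0 => f (x.1, b0)) x.2 := by
    refine Filter.Eventually.of_forall fun b0 => ?_
    have : f (x.1, x.2) = L := by simpa using hfx
    simpa [this] using hmaxb b0
  have hza := hLa.hasFDerivAt_eq_zero hga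
  have hzb := hLb.hasFDerivAt_eq_zero hgb
  ext u
  · rw [hza]; simp
  · rw [hzb]; simp
end
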